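/- Let φ₁,...,φₙ : K → K' and μ₁,...,μₙ : M → K be simplicial maps with μ₁ ∼ μ₂ ∼ ... ∼ μₙ (all in the same contiguity class). Then SD(φ₁∘μ₁,...,φₙ∘μₙ) ≤ SD(φ₁,...,φₙ). -/
import Mathlib


/-- An abstract simplicial complex on vertex type `V`. -/
structure ASC (V : Type) where
  faces : Set (Finset V)
  nonempty_of_mem : ∀ {s : Finset V}, s ∈ faces → s.Nonempty
  down_closed : ∀ {s t : Finset V}, s ∈ faces → t ⊆ s → t.Nonempty → t ∈ faces

/-- A simplicial map between abstract simplicial complexes. -/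
structure SMap {V W : Type} [DecidableEq W] (K : ASC V) (L : ASC W) where
  toFun : V → W
  maps_faces : ∀ {s : Finset V}, s ∈ K.faces → s.image toFun ∈ L.faces

namespace SMap

variable {V W U : Type} [DecidableEq V] [DecidableEq W] [DecidableEq U]
  {K : ASC V} {L : ASC W} {M : ASC U}

/-- The identity simplicial map. -/
def id (K : ASC V) : SMap K K :=
  ⟨fun v => v, by intro s hs; simpa using hs⟩

/-- Composition of simplicial maps. -/
def comp (ψ : SMap L M) (φ : SMap K L) : SMap K M :=
  ⟨ψ.toFun ∘ φ.toFun, by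
    intro s hs
    have h := ψ.maps_faces (φ.maps_faces hs)
    simpa [Finset.image_image] using h⟩

end SMap

/-- Two simplicial maps are contiguous if the images of each simplex under the two
maps together span a simplex. -/
def Contiguous {V W : Type} [DecidableEq W] {K : ASC V} {L : ASC W}
    (φ ψ : SMap K L) : Prop :=
  ∀ {s : Finset V}, s ∈ K.faces → (s.image φ.toFun ∪ s.image ψ.toFun) ∈ L.faces

/-- Being in the same contiguity class: the reflexive-transitive closure of
contiguity (`φ ∼ ψ`). -/
def CClass {V W : Type} [DecidableEq W] {K : ASC V} {L : ASC W}
    (φ ψ : SMap K L) : Prop :=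
  Relation.ReflTransGen Contiguous φ ψ

/-- The type of subcomplexes of `K`. -/
def ASC.Sub {V : Type} (K : ASC V) : Type :=
  {Ω : ASC V // Ω.faces ⊆ K.faces}

/-- Restriction of a simplicial map to a subcomplex of the domain. -/
def SMap.restrict {V W : Type} [DecidableEq W] {K : ASC V} {L : ASC W}
    (φ : SMap K L) (Ω : K.Sub) : SMap Ω.1 L :=
  ⟨φ.toFun, by intro s hs; exact φ.maps_faces (Ω.2 hs)⟩

/-- `SDle φ k` : the family `φ` has contiguity distance at most `k`, witnessed by a
cover of `K` by `k+1` subcomplexes on each of which all the maps restrict into a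
single contiguity class. -/
def SDle {V W : Type} [DecidableEq W] {K : ASC V} {L : ASC W} {n : ℕ}
    (φ : Fin n → SMap K L) (k : ℕ) : Prop :=
  ∃ Ω : Fin (k + 1) → K.Sub,
    (∀ s ∈ K.faces, ∃ j, s ∈ (Ω j).1.faces) ∧
    ∀ j i i', CClass ((φ i).restrict (Ω j)) ((φ i').restrict (Ω j))

/-- The `n`-th contiguity distance `SD(φ₁,…,φₙ)`, valued in `ℕ∞`. -/
noncomputable def SD {V W : Type} [DecidableEq W] {K : ASC V} {L : ASC W} {n : ℕ}
    (φ : Fin n → SMap K L) : ℕ∞ :=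
  sInf {m : ℕ∞ | ∃ k : ℕ, m = (k : ℕ∞) ∧ SDle φ k}

/-- `v` is a vertex of `K`. -/
def ASC.isVertex {V : Type} (K : ASC V) (v : V) : Prop :=
  ({v} : Finset V) ∈ K.faces

/-- The constant simplicial map at a vertex `v` of `L`. -/
def constMap {V W : Type} [DecidableEq W] (K : ASC V) (L : ASC W) {v : W}
    (hv : L.isVertex v) : SMap K L :=
  ⟨fun _ => v, by
    intro s hs
    rw [Finset.image_const (K.nonempty_of_mem hs) v]
    exact hv⟩

/-- The inclusion of a subcomplex. -/
def incl {V : Type} [DecidableEq V] {K : ASC V} (Ω : K.Sub) : SMap Ω.1 K :=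
  ⟨fun x => x, by intro s hs; simpa using Ω.2 hs⟩

/-- A subcomplex is categorical if its inclusion is in the same contiguity class
as a constant map. -/
def Categorical {V : Type} [DecidableEq V] {K : ASC V} (Ω : K.Sub) : Prop :=
  ∃ v : V, ∃ hv : K.isVertex v, CClass (incl Ω) (constMap Ω.1 K hv)

/-- `scatle K k` : `K` is covered by `k+1` categorical subcomplexes. -/
def scatle {V : Type} [DecidableEq V] (K : ASC V) (k : ℕ) : Prop :=
  ∃ Ω : Fin (k + 1) → K.Sub,
    (∀ s ∈ K.faces, ∃ j, s ∈ (Ω j).1.faces) ∧ ∀ j, Categorical (Ω j)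

/-- The simplicial Lusternik–Schnirelmann category, valued in `ℕ∞`. -/
noncomputable def scat {V : Type} [DecidableEq V] (K : ASC V) : ℕ∞ :=
  sInf {m : ℕ∞ | ∃ k : ℕ, m = (k : ℕ∞) ∧ scatle K k}

/-- The `n`-fold categorical product `Kⁿ`. -/
def ASC.prodPow {V : Type} [DecidableEq V] (K : ASC V) (n : ℕ) : ASC (Fin n → V) where
  faces := {s | s.Nonempty ∧ ∀ i : Fin n, s.image (fun f => f i) ∈ K.faces}
  nonempty_of_mem := fun h => h.1
  down_closed := by
    intro s t hs hts ht
    refine ⟨ht, fun i => ?_⟩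
    exact K.down_closed (hs.2 i) (Finset.image_subset_image (f := fun f => f i) hts)
      (ht.image _)

/-- Projection to the `i`-th factor of the categorical product. -/
def proj {V : Type} [DecidableEq V] (K : ASC V) (n : ℕ) (i : Fin n) :
    SMap (K.prodPow n) K :=
  ⟨fun f => f i, by intro s hs; exact hs.2 i⟩

/-- The diagonal simplicial map `K → Kⁿ`. -/
def diag {V : Type} [DecidableEq V] (K : ASC V) (n : ℕ) : SMap K (K.prodPow n) :=
  ⟨fun v _ => v, by
    intro s hs
    refine ⟨(K.nonempty_of_mem hs).image _, fun i => ?_⟩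
    have h : (s.image fun v (_ : Fin n) => v).image (fun f => f i) = s := by
      rw [Finset.image_image]
      exact Finset.image_id'
    rw [h]; exact hs⟩

/-- A subcomplex `Ω ⊆ Kⁿ` is `n`-Farber if the diagonal admits a section over `Ω`
up to contiguity class. -/
def IsFarber {V : Type} [DecidableEq V] {K : ASC V} {n : ℕ}
    (Ω : (K.prodPow n).Sub) : Prop :=
  ∃ σ : SMap Ω.1 K, CClass ((diag K n).comp σ) (incl Ω)

/-- `dTCle K n k` : `Kⁿ` is covered by `k+1` `n`-Farber subcomplexes. -/
def dTCle {V : Type} [DecidableEq V] (K : ASC V) (n k : ℕ) : Prop :=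
  ∃ Ω : Fin (k + 1) → (K.prodPow n).Sub,
    (∀ s ∈ (K.prodPow n).faces, ∃ j, s ∈ (Ω j).1.faces) ∧ ∀ j, IsFarber (Ω j)

/-- The `n`-th discrete topological complexity, valued in `ℕ∞`. -/
noncomputable def dTC {V : Type} [DecidableEq V] (K : ASC V) (n : ℕ) : ℕ∞ :=
  sInf {m : ℕ∞ | ∃ k : ℕ, m = (k : ℕ∞) ∧ dTCle K n k}

/-- `K` is edge-path connected: any two vertices are joined by a finite edge path. -/
def ASC.EPConn {V : Type} [DecidableEq V] (K : ASC V) : Prop :=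
  ∀ u v : V, K.isVertex u → K.isVertex v →
    Relation.ReflTransGen (fun a b => ({a, b} : Finset V) ∈ K.faces) u v

/-- `K` is strongly collapsible: the identity is in the same contiguity class as a
constant map. -/
def StronglyCollapsible {V : Type} [DecidableEq V] (K : ASC V) : Prop :=
  ∃ v : V, ∃ hv : K.isVertex v, CClass (SMap.id K) (constMap K K hv)

/-- `μ` is a right strong equivalence: it has a right strong homotopy inverse. -/
def RightStrongEq {V W : Type} [DecidableEq V] [DecidableEq W]
    {K : ASC V} {L : ASC W} (μ : SMap K L) : Prop :=
  ∃ α : SMap L K, CClass (μ.comp α) (SMap.id L)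

/-- `μ` is a left strong equivalence: it has a left strong homotopy inverse. -/
def LeftStrongEq {V W : Type} [DecidableEq V] [DecidableEq W]
    {K : ASC V} {L : ASC W} (μ : SMap K L) : Prop :=
  ∃ β : SMap L K, CClass (β.comp μ) (SMap.id K)

/-- The barycentric subdivision of `K`: vertices are the simplices of `K`, and
simplices are chains of simplices of `K`. -/
def ASC.sd {V : Type} (K : ASC V) : ASC (Finset V) where
  faces := {S | S.Nonempty ∧ (∀ σ ∈ S, σ ∈ K.faces) ∧
    ∀ σ ∈ S, ∀ τ ∈ S, σ ⊆ τ ∨ τ ⊆ σ}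
  nonempty_of_mem := fun h => h.1
  down_closed := fun hS hTS hT =>
    ⟨hT, fun σ hσ => hS.2.1 σ (hTS hσ), fun σ hσ τ hτ => hS.2.2 σ (hTS hσ) τ (hTS hτ)⟩

/-- The induced simplicial map on barycentric subdivisions. -/
def SMap.sd {V W : Type} [DecidableEq V] [DecidableEq W] {K : ASC V} {L : ASC W}
    (φ : SMap K L) : SMap K.sd L.sd :=
  ⟨fun σ => σ.image φ.toFun, by
    intro S hS
    refine ⟨hS.1.image _, ?_, ?_⟩
    · intro τ hτ
      simp only [Finset.mem_image] at hτ
      obtain ⟨σ, hσ, rfl⟩ := hτ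
      exact φ.maps_faces (hS.2.1 σ hσ)
    · intro τ₁ h₁ τ₂ h₂
      simp only [Finset.mem_image] at h₁ h₂
      obtain ⟨σ₁, hσ₁, rfl⟩ := h₁
      obtain ⟨σ₂, hσ₂, rfl⟩ := h₂
      rcases hS.2.2 σ₁ hσ₁ σ₂ hσ₂ with h | h
      · exact Or.inl (Finset.image_subset_image h)
      · exact Or.inr (Finset.image_subset_image h)⟩


section Aux
set_option linter.unusedSectionVars false

variable {U V W : Type} [DecidableEq V] [DecidableEq W]
  {M : ASC U} {K : ASC V} {L : ASC W}

omit [DecidableEq V] in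
theorem SMap.ext' {K : ASC V} {L : ASC W} {a b : SMap K L}
    (h : a.toFun = b.toFun) : a = b := by
  cases a; cases b; simpa using h

omit [DecidableEq V] in
theorem Contiguous.symm' {a b : SMap K L} (h : Contiguous a b) : Contiguous b a := by
  intro s hs
  rw [Finset.union_comm]
  exact h hs

omit [DecidableEq V] in
theorem CClass.symm' {a b : SMap K L} (h : CClass a b) : CClass b a := by
  induction h with
  | refl => exact Relation.ReflTransGen.refl
  | tail _ hbc ih => exact (Relation.ReflTransGen.single (r := Contiguous) hbc.symm').trans ih

omit [DecidableEq V] in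
theorem CClass.trans' {a b c : SMap K L} (h : CClass a b) (h' : CClass b c) :
    CClass a c := Relation.ReflTransGen.trans h h'

theorem CClass.comp_left {X Y Z : Type} [DecidableEq Y] [DecidableEq Z]
    {P : ASC X} {Q : ASC Y} {R : ASC Z} {a b : SMap P Q} (ψ : SMap Q R)
    (h : CClass a b) : CClass (ψ.comp a) (ψ.comp b) := by
  induction h with
  | refl => exact Relation.ReflTransGen.refl
  | tail _ hbc ih =>
      refine ih.tail ?_
      intro s hs
      have := ψ.maps_faces (hbc hs)
      simpa [SMap.comp, Finset.image_union, Finset.image_image] using this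

theorem CClass.comp_right {X Y Z : Type} [DecidableEq Y] [DecidableEq Z]
    {P : ASC X} {Q : ASC Y} {R : ASC Z} {a b : SMap Q R} (θ : SMap P Q)
    (h : CClass a b) : CClass (a.comp θ) (b.comp θ) := by
  induction h with
  | refl => exact Relation.ReflTransGen.refl
  | tail _ hbc ih =>
      refine ih.tail ?_
      intro s hs
      have := hbc (θ.maps_faces hs)
      simpa [SMap.comp, Finset.image_image] using this

omit [DecidableEq V] in
theorem CClass.restrict {a b : SMap K L} (Ω : K.Sub)
    (h : CClass a b) : CClass (a.restrict Ω) (b.restrict Ω) := by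
  induction h with
  | refl => exact Relation.ReflTransGen.refl
  | tail _ hbc ih =>
      refine ih.tail ?_
      intro s hs
      exact hbc (Ω.2 hs)

/-- Preimage of a subcomplex under a simplicial map. -/
def SMap.preimageSub (f : SMap M K) (Ω : K.Sub) : M.Sub :=
  ⟨{ faces := {s | s ∈ M.faces ∧ s.image f.toFun ∈ Ω.1.faces}
     nonempty_of_mem := fun h => M.nonempty_of_mem h.1
     down_closed := by
       intro s t hs hts ht
       exact ⟨M.down_closed hs.1 hts ht,
         Ω.1.down_closed hs.2 (Finset.image_subset_image hts) (ht.image _)⟩ },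
    by intro s hs; exact hs.1⟩

/-- `f` corestricted to a map between a subcomplex and the preimage. -/
def SMap.corestrict (f : SMap M K) (Ω : K.Sub) :
    SMap (f.preimageSub Ω).1 Ω.1 :=
  ⟨f.toFun, fun hs => hs.2⟩

end Aux

/-- if `μ₁ ∼ μ₂ ∼ … ∼ μₙ` then
`SD(φ₁∘μ₁,…,φₙ∘μₙ) ≤ SD(φ₁,…,φₙ)`. -/
theorem SD_comp_family_le {U V W : Type} [DecidableEq V] [DecidableEq W]
    {M : ASC U} {K : ASC V} {L : ASC W} {n : ℕ}
    (φ : Fin n → SMap K L) (μ : Fin n → SMap M K)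
    (hμ : ∀ (i : ℕ) (h : i + 1 < n),
      CClass (μ ⟨i, Nat.lt_of_succ_lt h⟩) (μ ⟨i + 1, h⟩)) :
    SD (fun i => (φ i).comp (μ i)) ≤ SD φ := by
  apply sInf_le_sInf
  rintro m ⟨k, rfl, Ω, Hcov, Hc⟩
  refine ⟨k, rfl, ?_⟩
  rcases Nat.eq_zero_or_pos n with hn | hn
  · subst hn
    exact ⟨fun _ => ⟨M, le_refl _⟩, fun s hs => ⟨0, hs⟩, fun j i => i.elim0⟩
  let i0 : Fin n := ⟨0, hn⟩
  have key : ∀ m (h : m < n), CClass (μ i0) (μ ⟨m, h⟩) := by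
    intro m
    induction m with
    | zero => intro h; exact Relation.ReflTransGen.refl
    | succ m ih => intro h; exact (ih (Nat.lt_of_succ_lt h)).trans' (hμ m h)
  have μclass : ∀ i : Fin n, CClass (μ i0) (μ i) := fun i => key i.1 i.2
  refine ⟨fun j => (μ i0).preimageSub (Ω j), ?_, ?_⟩
  · intro s hs
    obtain ⟨j, hj⟩ := Hcov _ ((μ i0).maps_faces hs)
    exact ⟨j, hs, hj⟩
  · intro j i i'
    set Λ := (μ i0).preimageSub (Ω j) with hΛ
    have eq1 : ∀ i : Fin n, ((φ i).comp (μ i0)).restrict Λ =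
        ((φ i).restrict (Ω j)).comp ((μ i0).corestrict (Ω j)) := fun i =>
      SMap.ext' rfl
    have step : ∀ i : Fin n,
        CClass (((φ i).comp (μ i)).restrict Λ) (((φ i).comp (μ i0)).restrict Λ) :=
      fun i => CClass.restrict Λ (CClass.comp_left (φ i) (μclass i).symm')
    refine (step i).trans' ?_
    refine CClass.trans' ?_ (step i').symm'
    rw [eq1 i, eq1 i']
    exact CClass.comp_right ((μ i0).corestrict (Ω j)) (Hc j i i')
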